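/- Each of v_top, v_bot, and each shared vertex v ∈ S = {v₁,…,v_{2m−1}} occurs exactly once in each segment s_j. -/
import Mathlib


namespace CRUAV

/-! ### Generic single-UAV CR-UAV notions -/

/-- Duration of the subpath of an infinite path `s` between positions `a` and `b`. -/
def dur {V : Type*} (FT : V → V → ℕ) (s : ℕ → V) (a b : ℕ) : ℕ :=
  ∑ i ∈ Finset.Ico a b, FT (s i) (s (i + 1))

/-- `s` is a solution: an infinite path (consecutive vertices distinct) visiting every
vertex infinitely often, in which any subpath joining consecutive occurrences of a
vertex `v` has duration at most `RD v`. -/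
def IsSolution {V : Type*} (RD : V → ℕ) (FT : V → V → ℕ) (s : ℕ → V) : Prop :=
  (∀ n, s n ≠ s (n + 1)) ∧
  (∀ v : V, ∀ N : ℕ, ∃ n, N ≤ n ∧ s n = v) ∧
  (∀ v : V, ∀ a b : ℕ, a < b → s a = v → s b = v →
      (∀ i, a < i → i < b → s i ≠ v) → dur FT s a b ≤ RD v)

/-- The infinite periodic path obtained by repeating the finite word `u` forever. -/
def omegaPath {V : Type*} (u : List V) (d : V) : ℕ → V :=
  fun n => u.getD (n % u.length) d

/-- Duration of a finite path given as a list of vertices. -/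
def durL {V : Type*} (FT : V → V → ℕ) (L : List V) : ℕ :=
  (L.zipWith FT L.tail).sum

/-- The (inclusive) slice of a list between positions `a` and `b`. -/
def slice {V : Type*} (L : List V) (a b : ℕ) : List V := (L.take (b + 1)).drop a

/-- Duration of the subpath of the finite path `L` between positions `a` and `b`. -/
def fragDur {V : Type*} (FT : V → V → ℕ) (d : V) (L : List V) (a b : ℕ) : ℕ :=
  ∑ i ∈ Finset.Ico a b, FT (L.getD i d) (L.getD (i + 1) d)

/-! ### The constructed instance `G` -/

/-- The constant `l = 24h + 34`. -/
def l (h : ℕ) : ℕ := 24 * h + 34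

/-- The constant `T`. -/
def T (m h : ℕ) : ℕ :=
  2 * (m * (2 * (3 * m + 1) * l h + l h) + m * (2 * (3 * m + 2) * l h + l h) + l h + 2 * h)

/-- The vertices of the constructed instance `G`.  Gadgets are indexed by
`g : Fin (2*m)`: gadget `g` with `g < m` belongs to the variable `x_{g+1}^0`, and
gadget `g` with `m ≤ g` to the variable `x_{g-m+1}^1`.  `shared k` is the vertex
`v_{k+1}` shared by consecutive gadgets.  In `side g right pos`, `right = false`
selects the left side `LS` and `right = true` the right side `RS`; `pos` is
`0` (top), `1` (middle), `2` (bottom).  `row g c pos` is the vertex of the row of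
gadget `g` in column `c` (of the `4h+2` columns of the `h` clause boxes alternating
with the `h+1` separator boxes) at height `pos`.  `clauseV k` is the clause vertex of
clause `c_{k+1}`; `pvt i right` is the pivot vertex of `LCG_{i+1}`/`RCG_{i+1}` and
`port i right d` its four surrounding vertices (`d`: `0` = in↓, `1` = out↑,
`2` = in↑, `3` = out↓). -/
inductive Vtx (m h : ℕ) : Type where
  | top : Vtx m h
  | bot : Vtx m h
  | mid : Vtx m h
  | shared (k : Fin (2 * m - 1)) : Vtx m h
  | side (g : Fin (2 * m)) (right : Bool) (pos : Fin 3) : Vtx m h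
  | row (g : Fin (2 * m)) (c : Fin (4 * h + 2)) (pos : Fin 3) : Vtx m h
  | clauseV (k : Fin h) : Vtx m h
  | pvt (i : Fin m) (right : Bool) : Vtx m h
  | port (i : Fin m) (right : Bool) (d : Fin 4) : Vtx m h
  deriving DecidableEq

/-- The vertex at the top of gadget `g`. -/
def topVtx {m h : ℕ} (g : Fin (2 * m)) : Vtx m h :=
  if hg : (g : ℕ) = 0 then .top else .shared ⟨(g : ℕ) - 1, by have := g.isLt; omega⟩

/-- The vertex at the bottom of gadget `g`. -/
def botVtx {m h : ℕ} (g : Fin (2 * m)) : Vtx m h :=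
  if hg : (g : ℕ) = 2 * m - 1 then .bot else .shared ⟨(g : ℕ), by have := g.isLt; omega⟩

/-- Flight time of the two long edges at the top of gadget `g`. -/
def longTop (m h : ℕ) (g : Fin (2 * m)) : ℕ :=
  if (g : ℕ) < m then (3 * m + 1) * l h else (3 * m + 2) * l h

/-- Flight time of the two long edges at the bottom of gadget `g`
(the bottom long edges of the gadget of `x_m^0` already have flight time `(3m+2)l`). -/
def longBot (m h : ℕ) (g : Fin (2 * m)) : ℕ :=
  if (g : ℕ) + 1 < m then (3 * m + 1) * l h else (3 * m + 2) * l h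

/-- The edges of `G`, listed in one direction, with their flight times.
`occurs k g = some true` (resp. `some false`) means that the variable of gadget `g`
occurs positively (resp. negatively) in the clause `c_{k+1}`. -/
def adjFT (m h : ℕ) (occurs : Fin h → Fin (2 * m) → Option Bool) :
    Vtx m h → Vtx m h → Option ℕ
  -- long edges from the top of the first gadget
  | .top, .side g _ p => if (g : ℕ) = 0 ∧ (p : ℕ) = 0 then some (longTop m h g) else none
  -- long edges into the bottom of the last gadget
  | .bot, .side g _ p => if (g : ℕ) = 2 * m - 1 ∧ (p : ℕ) = 2 then some (longBot m h g) else none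
  -- long edges at shared vertices
  | .shared k, .side g _ p =>
      if (k : ℕ) + 1 = (g : ℕ) ∧ (p : ℕ) = 0 then some (longTop m h g)
      else if (k : ℕ) = (g : ℕ) ∧ (p : ℕ) = 2 then some (longBot m h g)
      else none
  -- vertical edges inside `LS` and `RS`
  | .side g r p, .side g' r' p' =>
      if g = g' ∧ r = r' ∧ (p : ℕ) + 1 = (p' : ℕ) then some 2 else none
  -- vertical edges inside a column of a row, and horizontal edges along the top
  -- and the bottom of a row
  | .row g c p, .row g' c' p' =>
      if g = g' ∧ c = c' ∧ (p : ℕ) + 1 = (p' : ℕ) then some 2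
      else if g = g' ∧ (c : ℕ) + 1 = (c' : ℕ) ∧ p = p' ∧ ((p : ℕ) = 0 ∨ (p : ℕ) = 2) then
        some 2
      else none
  -- the edges at `v_mid`
  | .mid, .top => some (T m h / 4)
  | .mid, .bot => some (T m h / 4)
  -- edges joining a clause vertex to the two bottom (positive occurrence) or the two
  -- top (negative occurrence) corners of the corresponding clause box
  | .clauseV k, .row g c p =>
      if ((c : ℕ) = 4 * (k : ℕ) + 2 ∨ (c : ℕ) = 4 * (k : ℕ) + 3) ∧
          ((occurs k g = some true ∧ (p : ℕ) = 2) ∨ (occurs k g = some false ∧ (p : ℕ) = 0))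
      then some 2 else none
  -- edges inside the consistency gadgets
  | .pvt i r, .port i' r' _ => if i = i' ∧ r = r' then some 2 else none
  -- edges joining the ports of the consistency gadgets to the sides `LS`/`RS`:
  -- in↓ and out↑ serve the gadget of `x_{i+1}^0`, in↑ and out↓ that of `x_{i+1}^1`;
  -- "in" ports attach to the bottom of the side, "out" ports to its top
  | .port i r dd, .side g s p =>
      if s = r ∧
          ((((dd : ℕ) = 0 ∨ (dd : ℕ) = 1) ∧ (g : ℕ) = (i : ℕ)) ∨
            (((dd : ℕ) = 2 ∨ (dd : ℕ) = 3) ∧ (g : ℕ) = (i : ℕ) + m)) ∧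
          ((((dd : ℕ) = 0 ∨ (dd : ℕ) = 2) ∧ (p : ℕ) = 2) ∨
            (((dd : ℕ) = 1 ∨ (dd : ℕ) = 3) ∧ (p : ℕ) = 0))
      then some 2 else none
  -- edges joining the ports of the consistency gadgets to the end columns of the rows
  -- (as in Figure 4 of the paper: on the left, in↓/in↑ attach to the bottom-left and
  -- out↑/out↓ to the top-left row corner; on the right, in↓/in↑ attach to the
  -- top-right and out↑/out↓ to the bottom-right row corner)
  | .port i r dd, .row g c p =>
      if ((r = false ∧ (c : ℕ) = 0) ∨ (r = true ∧ (c : ℕ) = 4 * h + 1)) ∧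
          ((((dd : ℕ) = 0 ∨ (dd : ℕ) = 1) ∧ (g : ℕ) = (i : ℕ)) ∨
            (((dd : ℕ) = 2 ∨ (dd : ℕ) = 3) ∧ (g : ℕ) = (i : ℕ) + m)) ∧
          ((r = false ∧ ((((dd : ℕ) = 0 ∨ (dd : ℕ) = 2) ∧ (p : ℕ) = 2) ∨
              (((dd : ℕ) = 1 ∨ (dd : ℕ) = 3) ∧ (p : ℕ) = 0))) ∨
            (r = true ∧ ((((dd : ℕ) = 0 ∨ (dd : ℕ) = 2) ∧ (p : ℕ) = 0) ∨
              (((dd : ℕ) = 1 ∨ (dd : ℕ) = 3) ∧ (p : ℕ) = 2))))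
      then some 2 else none
  | _, _ => none

/-- The flight times of `G`: the listed edges, symmetrised; all remaining pairs of
distinct vertices are joined by an edge of flight time `2T`. -/
def FT (m h : ℕ) (occurs : Fin h → Fin (2 * m) → Option Bool) (v w : Vtx m h) : ℕ :=
  if v = w then 0
  else
    match adjFT m h occurs v w with
    | some x => x
    | none =>
      match adjFT m h occurs w v with
      | some x => x
      | none => 2 * T m h

/-- The relative deadlines of `G`. -/
def RD (m h : ℕ) : Vtx m h → ℕ
  | .top => T m h
  | .bot => T m h
  | .mid => T m h
  | .shared _ => T m h + 2 * h
  | .side _ _ _ => T m h + l h + 2 * h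
  | .row _ _ _ => T m h + l h + 2 * h
  | .clauseV _ => 3 * T m h / 2
  | .pvt i _ => T m h / 2 + m * (2 * (3 * m + 2) * l h + l h) + 4 * h - (2 * (i : ℕ) + 1) * l h
  | .port _ _ _ => 3 * T m h / 2

/-! ### Periodic solutions split into segments -/

/-- The word `v_mid s₁ v_mid s₂ ⋯ v_mid s_p`. -/
def word {m h p : ℕ} (segs : Fin p → List (Vtx m h)) : List (Vtx m h) :=
  (List.ofFn (fun j => Vtx.mid :: segs j)).flatten

/-- The infinite periodic path `(v_mid s₁ v_mid s₂ ⋯ v_mid s_p)^ω`. -/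
def pathOf {m h p : ℕ} (segs : Fin p → List (Vtx m h)) : ℕ → Vtx m h :=
  omegaPath (word segs) .mid

/-- The special vertices `S ∪ {v_top, v_bot}`. -/
def isSpecial {m h : ℕ} : Vtx m h → Bool
  | .top => true
  | .bot => true
  | .shared _ => true
  | _ => false

/-- A fragment of the segment `L`: a maximal subpath, from position `a` to position
`b`, whose endpoints are distinct special vertices and which contains no other
special vertex. -/
def Fragment {m h : ℕ} (L : List (Vtx m h)) (a b : ℕ) : Prop :=
  a < b ∧ b < L.length ∧
    isSpecial (L.getD a Vtx.mid) = true ∧ isSpecial (L.getD b Vtx.mid) = true ∧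
    L.getD a Vtx.mid ≠ L.getD b Vtx.mid ∧
    ∀ i, a < i → i < b → isSpecial (L.getD i Vtx.mid) = false

/-! ### Clause boxes, traversal patterns, traversal directions -/

/-- The column of the first (`sec = false`) or second (`sec = true`) column of the
`(k+1)`-st clause box. -/
def boxCol {h : ℕ} (k : Fin h) (sec : Bool) : Fin (4 * h + 2) :=
  ⟨4 * (k : ℕ) + 2 + (if sec then 1 else 0), by have := k.isLt; split <;> omega⟩

/-- The vertices of the `(k+1)`-st clause box of gadget `g`. -/
def boxV {m h : ℕ} (g : Fin (2 * m)) (k : Fin h) (sec : Bool) (p : Fin 3) : Vtx m h :=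
  .row g (boxCol k sec) p

/-- Membership in the `(k+1)`-st clause box of gadget `g`. -/
def InClauseBox {m h : ℕ} (g : Fin (2 * m)) (k : Fin h) (v : Vtx m h) : Prop :=
  ∃ sec p, v = boxV g k sec p

/-- The order of the six vertices of a clause box in pattern `⊓`, entered at the
bottom corner of column `flip`. -/
def sqcapSeq {m h : ℕ} (g : Fin (2 * m)) (k : Fin h) (flip : Bool) : List (Vtx m h) :=
  [boxV g k flip 2, boxV g k flip 1, boxV g k flip 0,
   boxV g k (!flip) 0, boxV g k (!flip) 1, boxV g k (!flip) 2]

/-- The order of the six vertices of a clause box in pattern `⊔`, entered at the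
top corner of column `flip`. -/
def sqcupSeq {m h : ℕ} (g : Fin (2 * m)) (k : Fin h) (flip : Bool) : List (Vtx m h) :=
  [boxV g k flip 0, boxV g k flip 1, boxV g k flip 2,
   boxV g k (!flip) 2, boxV g k (!flip) 1, boxV g k (!flip) 0]

/-- `L` traverses the vertices of `seq` in order, consecutively except for possible
detours from a vertex of `seq` to a clause vertex and immediately back. -/
def TraversedIn {m h : ℕ} (L : List (Vtx m h)) (seq : List (Vtx m h)) : Prop :=
  ∃ f : Fin seq.length → ℕ,
    (∀ t, f t < L.length) ∧
    (∀ t, L.getD (f t) Vtx.mid = seq.get t) ∧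
    (∀ (t : ℕ) (ht : t + 1 < seq.length),
      f ⟨t + 1, ht⟩ = f ⟨t, by omega⟩ + 1 ∨
        (f ⟨t + 1, ht⟩ = f ⟨t, by omega⟩ + 2 ∧
          ∃ k', L.getD (f ⟨t, by omega⟩ + 1) Vtx.mid = Vtx.clauseV k'))

/-- The `(k+1)`-st clause box of gadget `g` is traversed in pattern `⊓` by the
segment `L` (each of its vertices being visited exactly once, with possible detours
via clause vertices). -/
def SqcapBox {m h : ℕ} (L : List (Vtx m h)) (g : Fin (2 * m)) (k : Fin h) : Prop :=
  (∀ sec p, L.count (boxV g k sec p) = 1) ∧ ∃ flip, TraversedIn L (sqcapSeq g k flip)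

/-- The `(k+1)`-st clause box of gadget `g` is traversed in pattern `⊔` by the
segment `L`. -/
def SqcupBox {m h : ℕ} (L : List (Vtx m h)) (g : Fin (2 * m)) (k : Fin h) : Prop :=
  (∀ sec p, L.count (boxV g k sec p) = 1) ∧ ∃ flip, TraversedIn L (sqcupSeq g k flip)

/-- The gadget of `x_{i+1}^0`, as an index in `Fin (2*m)`. -/
def g0 {m : ℕ} (i : Fin m) : Fin (2 * m) := ⟨(i : ℕ), by have := i.isLt; omega⟩

/-- The gadget of `x_{i+1}^1`, as an index in `Fin (2*m)`. -/
def g1 {m : ℕ} (i : Fin m) : Fin (2 * m) := ⟨(i : ℕ) + m, by have := i.isLt; omega⟩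

/-- Gadget `g` is traversed in the `true` direction by the segment `L`: the long edges
are used to enter the left side `LS` from the top vertex and to leave from the right
side `RS` to the bottom vertex. -/
def TravTrue {m h : ℕ} (L : List (Vtx m h)) (g : Fin (2 * m)) : Prop :=
  (∃ n, n + 1 < L.length ∧ L.getD n Vtx.mid = topVtx g ∧
      L.getD (n + 1) Vtx.mid = Vtx.side g false 0) ∧
  (∃ n, n + 1 < L.length ∧ L.getD n Vtx.mid = Vtx.side g true 2 ∧
      L.getD (n + 1) Vtx.mid = botVtx g)

/-- Gadget `g` is traversed in the `false` direction by the segment `L`: the long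
edges are used to enter the right side `RS` from the top vertex and to leave from the
left side `LS` to the bottom vertex. -/
def TravFalse {m h : ℕ} (L : List (Vtx m h)) (g : Fin (2 * m)) : Prop :=
  (∃ n, n + 1 < L.length ∧ L.getD n Vtx.mid = topVtx g ∧
      L.getD (n + 1) Vtx.mid = Vtx.side g true 0) ∧
  (∃ n, n + 1 < L.length ∧ L.getD n Vtx.mid = Vtx.side g false 2 ∧
      L.getD (n + 1) Vtx.mid = botVtx g)

/-- Position of the first visit, within the first `m` fragments of the segment `L`
(i.e. at positions preceded by at most `m` occurrences of special vertices), of the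
pivot pair `{pvt_{i+1}^L, pvt_{i+1}^R}`. -/
noncomputable def firstVisitFH (m h : ℕ) (L : List (Vtx m h)) (i : Fin m) : ℕ :=
  sInf {n | n < L.length ∧ (L.take (n + 1)).countP isSpecial ≤ m ∧
    (L.getD n Vtx.mid = Vtx.pvt i false ∨ L.getD n Vtx.mid = Vtx.pvt i true)}

/-- Position of the first visit, within the last `m` fragments of the segment `L`
(i.e. at positions preceded by at least `m+1` occurrences of special vertices), of the
pivot pair `{pvt_{i+1}^L, pvt_{i+1}^R}`. -/
noncomputable def firstVisitSH (m h : ℕ) (L : List (Vtx m h)) (i : Fin m) : ℕ :=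
  sInf {n | n < L.length ∧ m + 1 ≤ (L.take (n + 1)).countP isSpecial ∧
    (L.getD n Vtx.mid = Vtx.pvt i false ∨ L.getD n Vtx.mid = Vtx.pvt i true)}

/-- `φ(j)` is satisfied: every clause is satisfied by the assignment `σ`, where the
variable `x_{i+1}^0` of clause `c_{k+1}` reads `σ j i` and the variable `x_{i+1}^1`
reads `σ (j+1) i`. -/
def SatisfiesAt (m h : ℕ) (occurs : Fin h → Fin (2 * m) → Option Bool)
    (σ : ℕ → Fin m → Bool) (j : ℕ) : Prop :=
  ∀ k : Fin h, ∃ (g : Fin (2 * m)) (b : Bool), occurs k g = some b ∧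
    (if hg : (g : ℕ) < m then σ j ⟨(g : ℕ), hg⟩ = b
     else σ (j + 1) ⟨(g : ℕ) - m, by have := g.isLt; omega⟩ = b)

section Arith
variable (m h : ℕ)

/-- `Q = T/4`. -/
def Q (m h : ℕ) : ℕ :=
  m * (2 * (3 * m + 1) * (12 * h + 17) + (12 * h + 17)) +
  m * (2 * (3 * m + 2) * (12 * h + 17) + (12 * h + 17)) + (12 * h + 17) + h

lemma T_eq_four_Q : T m h = 4 * Q m h := by
  unfold T Q l; ring

lemma T_div_four : T m h / 4 = Q m h := by
  rw [T_eq_four_Q]; omega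

lemma Q_pos (hh : 0 < h) : 0 < Q m h := by unfold Q; omega

lemma lh_pos : 0 < l h := by unfold l; omega

end Arith
section FTstruct
variable (m h : ℕ) (occurs : Fin h → Fin (2 * m) → Option Bool)

lemma le_longTop (g : Fin (2*m)) : (3*m+1) * l h ≤ longTop m h g := by
  unfold longTop; split
  · exact le_refl _
  · exact Nat.mul_le_mul_right _ (by omega)

lemma le_longBot (g : Fin (2*m)) : (3*m+1) * l h ≤ longBot m h g := by
  unfold longBot; split
  · exact le_refl _
  · exact Nat.mul_le_mul_right _ (by omega)

lemma adjFT_to_mid (v : Vtx m h) : adjFT m h occurs v Vtx.mid = none := by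
  cases v <;> rfl

lemma adjFT_into_special (v w : Vtx m h) (hv : v ≠ Vtx.mid) (hw : isSpecial w = true) :
    adjFT m h occurs v w = none := by
  cases v <;> cases w <;> simp_all [adjFT, isSpecial]

lemma FT_mid_right (v : Vtx m h) (hv : v ≠ Vtx.mid) :
    (FT m h occurs Vtx.mid v = Q m h ∧ (v = Vtx.top ∨ v = Vtx.bot)) ∨
      FT m h occurs Vtx.mid v = 2 * T m h := by
  have : T m h / 4 = Q m h := T_div_four m h
  cases v <;> simp_all [FT, adjFT, adjFT_to_mid]

lemma FT_mid_left (v : Vtx m h) (hv : v ≠ Vtx.mid) :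
    (FT m h occurs v Vtx.mid = Q m h ∧ (v = Vtx.top ∨ v = Vtx.bot)) ∨
      FT m h occurs v Vtx.mid = 2 * T m h := by
  have : T m h / 4 = Q m h := T_div_four m h
  cases v <;> simp_all [FT, adjFT]

lemma FT_from_special (v w : Vtx m h) (hv : isSpecial v = true) (hw : w ≠ v)
    (hwm : w ≠ Vtx.mid) :
    FT m h occurs v w = 2 * T m h ∨
      ((3*m+1) * l h ≤ FT m h occurs v w ∧ isSpecial w = false) := by
  have h1 := adjFT_into_special m h occurs w v hwm hv
  have h2 := le_longTop m h
  have h3 := le_longBot m h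
  cases v <;> cases w <;>
    simp_all [FT, adjFT, isSpecial] <;>
    (try exact fun e => absurd e.symm hw) <;>
    split_ifs <;> simp_all [isSpecial]

lemma FT_symm_special (v w : Vtx m h) (hv : isSpecial v = true) (hw : w ≠ v)
    (hwm : w ≠ Vtx.mid) : FT m h occurs w v = FT m h occurs v w := by
  have h1 := adjFT_into_special m h occurs w v hwm hv
  have hv' : v ≠ w := Ne.symm hw
  unfold FT
  rw [if_neg hw, if_neg hv', h1]

end FTstruct
section Blocks
variable {V : Type*} (d : V)

lemma flatten_getD : ∀ (ll : List (List V)) (j i : ℕ), j < ll.length →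
    i < (ll.getD j []).length →
    ll.flatten.getD ((((ll.map List.length).take j).sum) + i) d = (ll.getD j []).getD i d := by
  intro ll
  induction ll with
  | nil => intro j i hj; simp at hj
  | cons x rest ih =>
      intro j i hj hi
      cases j with
      | zero =>
          simp only [List.take_zero, List.sum_nil, Nat.zero_add, List.flatten_cons,
            List.getD_cons_zero] at hi ⊢
          exact List.getD_append _ _ _ _ hi
      | succ j =>
          simp only [List.map_cons, List.take_succ_cons, List.sum_cons, List.flatten_cons,
            List.getD_cons_succ] at hi ⊢
          have hj' : j < rest.length := by simpa using hj
          have := ih j i hj' hi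
          rw [Nat.add_assoc, List.getD_append_right _ _ _ _ (by omega)]
          simpa [Nat.add_sub_cancel_left] using this
end Blocks

section Infra
variable {m h : ℕ} {p : ℕ} (hp : 0 < p) (segs : Fin p → List (Vtx m h))

/-- The `j`-th segment, extended periodically. -/
def SG (j : ℕ) : List (Vtx m h) := segs ⟨j % p, Nat.mod_lt j hp⟩

/-- Starting position of the `j`-th block `mid :: SG j`. -/
def off (j : ℕ) : ℕ := ∑ i ∈ Finset.range j, (1 + (SG hp segs i).length)

lemma SG_lt (j : ℕ) (hj : j < p) : SG hp segs j = segs ⟨j, hj⟩ := by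
  simp [SG, Nat.mod_eq_of_lt hj]

lemma SG_period (j : ℕ) : SG hp segs (j + p) = SG hp segs j := by
  simp [SG, Nat.add_mod_right]

lemma off_zero : off hp segs 0 = 0 := rfl

lemma off_succ (j : ℕ) : off hp segs (j + 1) = off hp segs j + (1 + (SG hp segs j).length) :=
  Finset.sum_range_succ _ _

lemma off_lt_succ (j : ℕ) : off hp segs j < off hp segs (j + 1) := by
  rw [off_succ]; omega

lemma off_mono {j k : ℕ} (hjk : j ≤ k) : off hp segs j ≤ off hp segs k := by
  induction k with
  | zero => exact le_of_eq (by rw [Nat.le_zero.mp hjk])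
  | succ k ih =>
      rcases Nat.lt_or_ge j (k+1) with hlt | hge
      · have h1 := ih (by omega); have h2 := off_lt_succ hp segs k; omega
      · exact le_of_eq (by rw [Nat.le_antisymm hjk hge])

lemma word_length : (word segs).length = off hp segs p := by
  unfold word
  rw [List.length_flatten, List.map_ofFn, List.sum_ofFn]
  unfold off
  rw [← Fin.sum_univ_eq_sum_range (fun j => 1 + (SG hp segs j).length) p]
  apply Finset.sum_congr rfl
  intro i _
  simp [Function.comp, SG_lt hp segs i.val i.isLt]
  omega

lemma off_add_p (j : ℕ) : off hp segs (j + p) = off hp segs j + off hp segs p := by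
  induction j with
  | zero => simp [off_zero]
  | succ j ih =>
      have e : j + 1 + p = (j + p) + 1 := by omega
      rw [e, off_succ, ih, SG_period, off_succ]
      ring

lemma off_add_mul (j k : ℕ) : off hp segs (j + k * p) = off hp segs j + k * off hp segs p := by
  induction k with
  | zero => simp
  | succ k ih =>
      have e : j + (k+1) * p = (j + k * p) + p := by ring
      rw [e, off_add_p, ih]; ring

lemma N_pos : 0 < off hp segs p := by
  calc 0 < off hp segs 1 := by rw [off_succ, off_zero]; omega
  _ ≤ _ := off_mono hp segs hp

lemma pathOf_period (n : ℕ) : pathOf segs (n + off hp segs p) = pathOf segs n := by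
  unfold pathOf omegaPath
  rw [word_length hp segs, Nat.add_mod_right]

lemma pathOf_decode_lt (j : ℕ) (hj : j < p) (i : ℕ) (hi : i < 1 + (SG hp segs j).length) :
    pathOf segs (off hp segs j + i) = (Vtx.mid :: SG hp segs j).getD i Vtx.mid := by
  unfold pathOf omegaPath
  have hlen := word_length hp segs
  have hlt : off hp segs j + i < off hp segs p := by
    have h1 : off hp segs j + i < off hp segs (j + 1) := by rw [off_succ]; omega
    have h2 : off hp segs (j + 1) ≤ off hp segs p := off_mono hp segs (by omega)
    omega
  rw [hlen, Nat.mod_eq_of_lt hlt]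
  have hLL : word segs = (List.ofFn (fun j => Vtx.mid :: segs j)).flatten := rfl
  set LL := List.ofFn (fun j : Fin p => Vtx.mid :: segs j) with hLLdef
  have hLLlen : LL.length = p := by simp [hLLdef]
  have hget : LL.getD j [] = Vtx.mid :: SG hp segs j := by
    rw [List.getD_eq_getElem LL [] (by omega)]
    simp [hLLdef, SG_lt hp segs j hj]
  have hpre : ∀ j' ≤ p, ((LL.map List.length).take j').sum = off hp segs j' := by
    intro j'
    induction j' with
    | zero => intro _; simp [off_zero]
    | succ j' ih =>
        intro hj'
        have hj'' : j' < (LL.map List.length).length := by simp [hLLlen]; omega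
        rw [List.sum_take_succ _ _ hj'', ih (by omega), off_succ]
        congr 1
        simp [hLLdef, SG_lt hp segs j' (by omega)]
        omega
  have := flatten_getD Vtx.mid LL j i (by omega)
    (by rw [hget]; simp only [List.length_cons]; omega)
  rw [hpre j (by omega), hget] at this
  rw [hLL]
  exact this

lemma pathOf_decode (j : ℕ) (i : ℕ) (hi : i < 1 + (SG hp segs j).length) :
    pathOf segs (off hp segs j + i) = (Vtx.mid :: SG hp segs j).getD i Vtx.mid := by
  have hj := Nat.mod_lt j hp
  have hSG : SG hp segs j = SG hp segs (j % p) := by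
    unfold SG; congr 1
    exact Fin.ext (by simp [Nat.mod_eq_of_lt hj])
  have hper : ∀ n k, pathOf segs (n + k * off hp segs p) = pathOf segs n := by
    intro n k
    induction k with
    | zero => simp
    | succ k ih => rw [Nat.succ_mul, ← Nat.add_assoc, pathOf_period hp segs, ih]
  rw [hSG] at hi ⊢
  conv_lhs => rw [(Nat.mod_add_div' j p).symm]
  rw [off_add_mul, Nat.add_right_comm, hper]
  exact pathOf_decode_lt hp segs (j % p) hj i hi

end Infra
section DurLemmas
variable {V : Type*}

lemma getD_mem' {l : List V} {n : ℕ} {d : V} (hn : n < l.length) : l.getD n d ∈ l := by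
  rw [List.getD_eq_getElem l d hn]; exact List.getElem_mem _

lemma dur_split (F : V → V → ℕ) (s : ℕ → V) {a b c : ℕ} (h1 : a ≤ b) (h2 : b ≤ c) :
    dur F s a c = dur F s a b + dur F s b c :=
  (Finset.sum_Ico_consecutive _ h1 h2).symm

lemma dur_single (F : V → V → ℕ) (s : ℕ → V) (a : ℕ) :
    dur F s a (a+1) = F (s a) (s (a+1)) := by
  unfold dur
  rw [Finset.sum_Ico_eq_sum_range]
  simp

lemma one_term_le (F : V → V → ℕ) (s : ℕ → V) {a i b : ℕ} (h1 : a ≤ i) (h2 : i < b) :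
    F (s i) (s (i+1)) ≤ dur F s a b :=
  Finset.single_le_sum (f := fun i => F (s i) (s (i+1))) (fun _ _ => Nat.zero_le _)
    (Finset.mem_Ico.mpr ⟨h1, h2⟩)

lemma two_term_le (F : V → V → ℕ) (s : ℕ → V) {a i k b : ℕ} (h1 : a ≤ i) (h2 : i < k)
    (h3 : k < b) : F (s i) (s (i+1)) + F (s k) (s (k+1)) ≤ dur F s a b := by
  have hsub : ({i, k} : Finset ℕ) ⊆ Finset.Ico a b := by
    intro x hx
    simp only [Finset.mem_insert, Finset.mem_singleton] at hx
    rw [Finset.mem_Ico]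
    rcases hx with rfl | rfl <;> omega
  calc F (s i) (s (i+1)) + F (s k) (s (k+1))
      = ∑ x ∈ ({i, k} : Finset ℕ), F (s x) (s (x+1)) := (Finset.sum_pair (f := fun x => F (s x) (s (x+1))) (Nat.ne_of_lt h2)).symm
    _ ≤ dur F s a b := Finset.sum_le_sum_of_subset hsub

end DurLemmas

section Path
variable {m h p : ℕ}
variable (occurs : Fin h → Fin (2 * m) → Option Bool)
variable (hp : 0 < p) (segs : Fin p → List (Vtx m h))

lemma SG_len_pos (hne : ∀ j, segs j ≠ []) (j : ℕ) : 0 < (SG hp segs j).length := by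
  unfold SG; exact List.length_pos_iff.mpr (hne _)

lemma mid_notMem_SG (hmid : ∀ j, Vtx.mid ∉ segs j) (j : ℕ) :
    Vtx.mid ∉ SG hp segs j := hmid _

lemma s_off (j : ℕ) : pathOf segs (off hp segs j) = Vtx.mid := by
  have := pathOf_decode hp segs j 0 (by omega)
  simpa using this

lemma s_at (j i : ℕ) (hi : i < (SG hp segs j).length) :
    pathOf segs (off hp segs j + 1 + i) = (SG hp segs j).getD i Vtx.mid := by
  have h2 := pathOf_decode hp segs j (i + 1) (by omega)
  have e : off hp segs j + 1 + i = off hp segs j + (i + 1) := by omega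
  rw [e, h2, List.getD_cons_succ]

lemma s_inside_mem (j n : ℕ) (h1 : off hp segs j < n) (h2 : n < off hp segs (j+1)) :
    pathOf segs n ∈ SG hp segs j := by
  have hB := off_succ hp segs j
  set i := n - off hp segs j - 1 with hidef
  have hi : i < (SG hp segs j).length := by omega
  have hn : n = off hp segs j + 1 + i := by omega
  rw [hn, s_at hp segs j i hi]
  exact getD_mem' hi

lemma s_inside_ne_mid (hmid : ∀ j, Vtx.mid ∉ segs j) (j n : ℕ)
    (h1 : off hp segs j < n) (h2 : n < off hp segs (j+1)) : pathOf segs n ≠ Vtx.mid := by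
  intro hcon
  exact mid_notMem_SG hp segs hmid j (hcon ▸ s_inside_mem hp segs j n h1 h2)

lemma locate (n : ℕ) : ∃ j, off hp segs j ≤ n ∧ n < off hp segs (j+1) := by
  induction n with
  | zero =>
      refine ⟨0, by simp [off_zero], ?_⟩
      have := off_lt_succ hp segs 0
      have h0 := off_zero hp segs
      omega
  | succ n ih =>
      obtain ⟨j, h1, h2⟩ := ih
      rcases Nat.lt_or_ge (n+1) (off hp segs (j+1)) with h3 | h3
      · exact ⟨j, by omega, h3⟩
      · refine ⟨j+1, by omega, ?_⟩
        have := off_lt_succ hp segs (j+1)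
        omega

lemma s_mid_iff (hmid : ∀ j, Vtx.mid ∉ segs j) (n : ℕ) :
    pathOf segs n = Vtx.mid ↔ ∃ j, n = off hp segs j := by
  constructor
  · intro hn
    obtain ⟨j, h1, h2⟩ := locate hp segs n
    rcases Nat.eq_or_lt_of_le h1 with heq | hlt
    · exact ⟨j, heq.symm⟩
    · exact absurd hn (s_inside_ne_mid hp segs hmid j n hlt h2)
  · rintro ⟨j, rfl⟩; exact s_off hp segs j

lemma off_gt_iff {j j' : ℕ} : off hp segs j < off hp segs j' → j < j' := by
  intro hlt
  by_contra hcon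
  exact absurd (off_mono hp segs (by omega : j' ≤ j)) (by omega)

lemma D_le (hmid : ∀ j, Vtx.mid ∉ segs j)
    (hsol : IsSolution (RD m h) (FT m h occurs) (pathOf segs)) (j : ℕ) :
    dur (FT m h occurs) (pathOf segs) (off hp segs j) (off hp segs (j+1)) ≤ T m h := by
  have hbetween : ∀ i, off hp segs j < i → i < off hp segs (j+1) →
      pathOf segs i ≠ Vtx.mid := fun i h1 h2 => s_inside_ne_mid hp segs hmid j i h1 h2
  have := hsol.2.2 Vtx.mid (off hp segs j) (off hp segs (j+1)) (off_lt_succ hp segs j)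
    (s_off hp segs j) (s_off hp segs j.succ) hbetween
  exact this

lemma dur_single' {V : Type*} (F : V → V → ℕ) (s : ℕ → V) {a b : ℕ} (hab : b = a + 1) :
    dur F s a b = F (s a) (s b) := by
  subst hab; exact dur_single F s a

lemma block_struct (hh : 0 < h) (hne : ∀ j, segs j ≠ []) (hmid : ∀ j, Vtx.mid ∉ segs j)
    (hsol : IsSolution (RD m h) (FT m h occurs) (pathOf segs)) (j : ℕ) :
    (pathOf segs (off hp segs j + 1) = Vtx.top ∨ pathOf segs (off hp segs j + 1) = Vtx.bot) ∧
    (pathOf segs (off hp segs (j+1) - 1) = Vtx.top ∨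
      pathOf segs (off hp segs (j+1) - 1) = Vtx.bot) ∧
    dur (FT m h occurs) (pathOf segs) (off hp segs j + 1) (off hp segs (j+1) - 1)
      ≤ 2 * Q m h := by
  have hB : off hp segs (j+1) = off hp segs j + 1 + (SG hp segs j).length := by
    rw [off_succ]; ring
  have hlen : 0 < (SG hp segs j).length := SG_len_pos hp segs hne j
  have hD : dur (FT m h occurs) (pathOf segs) (off hp segs j) (off hp segs (j+1)) ≤ T m h :=
    D_le occurs hp segs hmid hsol j
  have hsplit : dur (FT m h occurs) (pathOf segs) (off hp segs j) (off hp segs (j+1)) =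
      FT m h occurs (pathOf segs (off hp segs j)) (pathOf segs (off hp segs j + 1)) +
      dur (FT m h occurs) (pathOf segs) (off hp segs j + 1) (off hp segs (j+1) - 1) +
      FT m h occurs (pathOf segs (off hp segs (j+1) - 1)) (pathOf segs (off hp segs (j+1))) := by
    have e1 := dur_split (FT m h occurs) (pathOf segs)
      (show off hp segs j ≤ off hp segs j + 1 by omega)
      (show off hp segs j + 1 ≤ off hp segs (j+1) by omega)
    have e2 := dur_split (FT m h occurs) (pathOf segs)
      (show off hp segs j + 1 ≤ off hp segs (j+1) - 1 by omega)
      (show off hp segs (j+1) - 1 ≤ off hp segs (j+1) by omega)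
    have e3 := dur_single' (FT m h occurs) (pathOf segs)
      (show off hp segs (j+1) = (off hp segs (j+1) - 1) + 1 by omega)
    have e4 := dur_single (FT m h occurs) (pathOf segs) (off hp segs j)
    rw [e1, e2, e3, e4]
    ring
  have hQ := Q_pos m h hh
  have hTQ := T_eq_four_Q m h
  have hsA : pathOf segs (off hp segs j) = Vtx.mid := s_off hp segs j
  have hsB : pathOf segs (off hp segs (j+1)) = Vtx.mid := s_off hp segs (j+1)
  have h1m : pathOf segs (off hp segs j + 1) ≠ Vtx.mid :=
    s_inside_ne_mid hp segs hmid j _ (by omega) (by omega)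
  have h2m : pathOf segs (off hp segs (j+1) - 1) ≠ Vtx.mid :=
    s_inside_ne_mid hp segs hmid j _ (by omega) (by omega)
  have hfirst : FT m h occurs (pathOf segs (off hp segs j)) (pathOf segs (off hp segs j + 1))
      = Q m h ∧ (pathOf segs (off hp segs j + 1) = Vtx.top ∨
        pathOf segs (off hp segs j + 1) = Vtx.bot) := by
    rw [hsA]
    rcases FT_mid_right m h occurs (pathOf segs (off hp segs j + 1)) h1m with ⟨hq, hbt⟩ | h2T
    · exact ⟨hq, hbt⟩
    · exfalso
      rw [hsA] at hsplit
      omega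
  have hlast : FT m h occurs (pathOf segs (off hp segs (j+1) - 1))
        (pathOf segs (off hp segs (j+1)))
      = Q m h ∧ (pathOf segs (off hp segs (j+1) - 1) = Vtx.top ∨
        pathOf segs (off hp segs (j+1) - 1) = Vtx.bot) := by
    rw [hsB]
    rcases FT_mid_left m h occurs (pathOf segs (off hp segs (j+1) - 1)) h2m with ⟨hq, hbt⟩ | h2T
    · exact ⟨hq, hbt⟩
    · exfalso
      rw [hsB] at hsplit
      omega
  refine ⟨hfirst.2, hlast.2, ?_⟩
  rw [hsA] at hfirst
  rw [hsB] at hlast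
  rw [hsA, hsB, hfirst.1, hlast.1] at hsplit
  omega

lemma interior_edge_cheap (hh : 0 < h) (hne : ∀ j, segs j ≠ []) (hmid : ∀ j, Vtx.mid ∉ segs j)
    (hsol : IsSolution (RD m h) (FT m h occurs) (pathOf segs)) (j i : ℕ)
    (h1 : off hp segs j < i) (h2 : i + 1 < off hp segs (j+1)) :
    FT m h occurs (pathOf segs i) (pathOf segs (i+1)) < 2 * T m h := by
  have hblk := (block_struct occurs hp segs hh hne hmid hsol j).2.2
  have hone : FT m h occurs (pathOf segs i) (pathOf segs (i+1)) ≤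
      dur (FT m h occurs) (pathOf segs) (off hp segs j + 1) (off hp segs (j+1) - 1) :=
    one_term_le _ _ (by omega) (by omega)
  have hQ := Q_pos m h hh
  have hTQ := T_eq_four_Q m h
  omega

end Path
section Straddle
variable {m h p : ℕ}
variable (occurs : Fin h → Fin (2 * m) → Option Bool)
variable (hp : 0 < p) (segs : Fin p → List (Vtx m h))

lemma SG_mod (j : ℕ) : SG hp segs j = SG hp segs (j % p) := by
  unfold SG; congr 1
  exact Fin.ext (by simp [Nat.mod_eq_of_lt (Nat.mod_lt j hp)])

lemma F_mid_ge (hh : 0 < h) (v : Vtx m h) (hv : v ≠ Vtx.mid) :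
    Q m h ≤ FT m h occurs Vtx.mid v ∧ Q m h ≤ FT m h occurs v Vtx.mid := by
  have hTQ := T_eq_four_Q m h
  have hQ := Q_pos m h hh
  constructor
  · rcases FT_mid_right m h occurs v hv with ⟨hq, _⟩ | h2T <;> omega
  · rcases FT_mid_left m h occurs v hv with ⟨hq, _⟩ | h2T <;> omega

lemma block_split (hne : ∀ j, segs j ≠ []) (j : ℕ) :
    dur (FT m h occurs) (pathOf segs) (off hp segs j) (off hp segs (j+1)) =
      FT m h occurs (pathOf segs (off hp segs j)) (pathOf segs (off hp segs j + 1)) +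
      dur (FT m h occurs) (pathOf segs) (off hp segs j + 1) (off hp segs (j+1) - 1) +
      FT m h occurs (pathOf segs (off hp segs (j+1) - 1)) (pathOf segs (off hp segs (j+1))) := by
  have hB : off hp segs (j+1) = off hp segs j + 1 + (SG hp segs j).length := by
    rw [off_succ]; ring
  have hlen : 0 < (SG hp segs j).length := SG_len_pos hp segs hne j
  have e1 := dur_split (FT m h occurs) (pathOf segs)
    (show off hp segs j ≤ off hp segs j + 1 by omega)
    (show off hp segs j + 1 ≤ off hp segs (j+1) by omega)
  have e2 := dur_split (FT m h occurs) (pathOf segs)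
    (show off hp segs j + 1 ≤ off hp segs (j+1) - 1 by omega)
    (show off hp segs (j+1) - 1 ≤ off hp segs (j+1) by omega)
  have e3 := dur_single' (FT m h occurs) (pathOf segs)
    (show off hp segs (j+1) = (off hp segs (j+1) - 1) + 1 by omega)
  have e4 := dur_single (FT m h occurs) (pathOf segs) (off hp segs j)
  rw [e1, e2, e3, e4]
  ring

lemma straddle (hmid : ∀ j, Vtx.mid ∉ segs j)
    (hsol : IsSolution (RD m h) (FT m h occurs) (pathOf segs))
    (v : Vtx m h) (hvm : v ≠ Vtx.mid) (j : ℕ) (hv : v ∉ SG hp segs j) :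
    ∃ a b, pathOf segs a = v ∧ pathOf segs b = v ∧
      a < off hp segs (j + p) ∧ off hp segs (j + p + 1) < b ∧
      dur (FT m h occurs) (pathOf segs) a b ≤ RD m h v ∧
      (∀ i, a < i → i < b → pathOf segs i ≠ v) := by
  have hSGper : SG hp segs (j + p) = SG hp segs j := SG_period hp segs j
  have hex : ∃ n, off hp segs (j + p + 1) + 1 ≤ n ∧ pathOf segs n = v := by
    obtain ⟨n, hn1, hn2⟩ := hsol.2.1 v (off hp segs (j + p + 1) + 1)
    exact ⟨n, hn1, hn2⟩
  obtain ⟨b, hb1, hb2, hbmin⟩ : ∃ b, off hp segs (j + p + 1) + 1 ≤ b ∧ pathOf segs b = v ∧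
      ∀ n, n < b → ¬(off hp segs (j + p + 1) + 1 ≤ n ∧ pathOf segs n = v) :=
    ⟨Nat.find hex, (Nat.find_spec hex).1, (Nat.find_spec hex).2,
      fun n hn => Nat.find_min hex hn⟩
  -- an occurrence of v before off (j+p)
  obtain ⟨n1, -, hn1v⟩ := hsol.2.1 v 0
  obtain ⟨j2, hj2a, hj2b⟩ := locate hp segs n1
  have hn1ne : n1 ≠ off hp segs j2 := by
    intro e; rw [e, s_off hp segs j2] at hn1v; exact hvm hn1v.symm
  have hvmem : v ∈ SG hp segs (j2 % p) := by
    rw [← SG_mod hp segs j2, ← hn1v]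
    exact s_inside_mem hp segs j2 n1 (by omega) hj2b
  obtain ⟨i0, hi0, hi0v⟩ := List.getElem_of_mem hvmem
  have hn0v : pathOf segs (off hp segs (j2 % p) + 1 + i0) = v := by
    rw [s_at hp segs (j2 % p) i0 hi0, List.getD_eq_getElem _ _ hi0, hi0v]
  have hn0lt : off hp segs (j2 % p) + 1 + i0 < off hp segs (j + p) := by
    have h1 : off hp segs (j2 % p) + 1 + i0 < off hp segs (j2 % p + 1) := by
      rw [off_succ]; omega
    have h2 : off hp segs (j2 % p + 1) ≤ off hp segs p :=
      off_mono hp segs (by have := Nat.mod_lt j2 hp; omega)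
    have h3 : off hp segs p ≤ off hp segs (j + p) := off_mono hp segs (by omega)
    omega
  have hMM : off hp segs (j + p) < off hp segs (j + p + 1) := off_lt_succ hp segs _
  have hn0b : off hp segs (j2 % p) + 1 + i0 ≤ b - 1 := by omega
  obtain ⟨a, ha_spec, ha_le, ha_gr⟩ : ∃ a, pathOf segs a = v ∧ a ≤ b - 1 ∧
      ∀ i, a < i → i ≤ b - 1 → pathOf segs i ≠ v :=
    ⟨Nat.findGreatest (fun n => pathOf segs n = v) (b - 1),
      Nat.findGreatest_spec (P := fun n => pathOf segs n = v) hn0b hn0v,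
      Nat.findGreatest_le _,
      fun i h1 h2 => Nat.findGreatest_is_greatest h1 h2⟩
  have hno : ∀ i, a < i → i < b → pathOf segs i ≠ v := by
    intro i h1 h2
    exact ha_gr i h1 (by omega)
  have ha_notmid1 : a ≠ off hp segs (j + p) := by
    intro e; rw [e, s_off] at ha_spec; exact hvm ha_spec.symm
  have ha_notmid2 : a ≠ off hp segs (j + p + 1) := by
    intro e; rw [e, s_off] at ha_spec; exact hvm ha_spec.symm
  have ha_notM1b : ¬ (off hp segs (j + p + 1) < a) := by
    intro hgt
    exact hbmin a (by omega) ⟨by omega, ha_spec⟩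
  have ha_notinside : ¬ (off hp segs (j + p) < a ∧ a < off hp segs (j + p + 1)) := by
    rintro ⟨h1, h2⟩
    have : pathOf segs a ∈ SG hp segs (j + p) := s_inside_mem hp segs (j + p) a h1 h2
    rw [ha_spec, hSGper] at this
    exact hv this
  have haM0 : a < off hp segs (j + p) := by
    rcases Nat.lt_or_ge a (off hp segs (j + p)) with h1 | h1
    · exact h1
    · exfalso
      rcases Nat.lt_or_ge a (off hp segs (j + p + 1)) with h2 | h2
      · exact ha_notinside ⟨by omega, h2⟩
      · have : off hp segs (j+p+1) < a := by omega
        exact ha_notM1b this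
  have hdur := hsol.2.2 v a b (by omega) ha_spec hb2 hno
  exact ⟨a, b, ha_spec, hb2, haM0, by omega, hdur, hno⟩

end Straddle
section Mem
variable {m h p : ℕ}
variable (occurs : Fin h → Fin (2 * m) → Option Bool)
variable (hp : 0 < p) (segs : Fin p → List (Vtx m h))

lemma shared_mem (hh : 0 < h) (hne : ∀ j, segs j ≠ []) (hmid : ∀ j, Vtx.mid ∉ segs j)
    (hsol : IsSolution (RD m h) (FT m h occurs) (pathOf segs))
    (j : ℕ) (k : Fin (2*m-1)) : Vtx.shared k ∈ SG hp segs j := by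
  by_contra hv
  obtain ⟨a, b, hav, hbv, haM0, hM1b, hdur, hno⟩ :=
    straddle occurs hp segs hmid hsol (Vtx.shared k) (by simp) j hv
  have hQ := Q_pos m h hh
  have hTQ := T_eq_four_Q m h
  have hMM : off hp segs (j+p) < off hp segs (j+p+1) := off_lt_succ hp segs _
  have hB0 : off hp segs (j+p+1) = off hp segs (j+p) + 1 + (SG hp segs (j+p)).length := by
    rw [off_succ]; ring
  have hlen0 : 0 < (SG hp segs (j+p)).length := SG_len_pos hp segs hne (j+p)
  -- (ii) dur a M0 ≥ (3m+1)l + Q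
  obtain ⟨j2, hj2a, hj2b⟩ := locate hp segs a
  have ha_ne_off : a ≠ off hp segs j2 := by
    intro e; rw [e, s_off] at hav; exact absurd hav (by simp)
  have hj2lt : j2 < j + p := off_gt_iff hp segs (by omega)
  have hoffle : off hp segs (j2+1) ≤ off hp segs (j+p) := off_mono hp segs (by omega)
  have ha1lt : a + 1 < off hp segs (j2+1) := by
    rcases Nat.lt_or_ge (a+1) (off hp segs (j2+1)) with h1 | h1
    · exact h1
    · exfalso
      have he : a = off hp segs (j2+1) - 1 := by omega
      have hbs := (block_struct occurs hp segs hh hne hmid hsol j2).2.1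
      rw [← he] at hbs
      rcases hbs with h2 | h2 <;> rw [hav] at h2 <;> exact absurd h2 (by simp)
  have hcheap1 : FT m h occurs (pathOf segs a) (pathOf segs (a+1)) < 2 * T m h :=
    interior_edge_cheap occurs hp segs hh hne hmid hsol j2 a (by omega) ha1lt
  have ha1mid : pathOf segs (a+1) ≠ Vtx.mid :=
    s_inside_ne_mid hp segs hmid j2 (a+1) (by omega) (by omega)
  have ha1ne : pathOf segs (a+1) ≠ pathOf segs a := Ne.symm (hsol.1 a)
  have hedge1 : (3*m+1) * l h ≤ FT m h occurs (pathOf segs a) (pathOf segs (a+1)) := by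
    rcases FT_from_special m h occurs (pathOf segs a) (pathOf segs (a+1))
      (by rw [hav]; rfl) ha1ne ha1mid with h2T | ⟨hge, _⟩
    · omega
    · exact hge
  have hedge2 : Q m h ≤ FT m h occurs (pathOf segs (off hp segs (j+p) - 1))
      (pathOf segs (off hp segs (j+p) - 1 + 1)) := by
    have e : off hp segs (j+p) - 1 + 1 = off hp segs (j+p) := by omega
    have hmid0 : pathOf segs (off hp segs (j+p) - 1 + 1) = Vtx.mid := by
      rw [e]; exact s_off hp segs (j+p)
    have hne' : pathOf segs (off hp segs (j+p) - 1) ≠ Vtx.mid := by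
      have hd := hsol.1 (off hp segs (j+p) - 1)
      rw [hmid0] at hd; exact hd
    rw [hmid0]
    exact (F_mid_ge occurs hh _ hne').2
  have hduraM0 : (3*m+1) * l h + Q m h ≤
      dur (FT m h occurs) (pathOf segs) a (off hp segs (j+p)) := by
    have h2t := two_term_le (FT m h occurs) (pathOf segs)
      (le_refl a) (show a < off hp segs (j+p) - 1 by omega)
      (show off hp segs (j+p) - 1 < off hp segs (j+p) by omega)
    omega
  -- roundtrip ≥ 2Q
  have hsplitM := block_split occurs hp segs hne (j+p)
  have hfQ : Q m h ≤ FT m h occurs (pathOf segs (off hp segs (j+p)))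
      (pathOf segs (off hp segs (j+p) + 1)) := by
    rw [s_off hp segs (j+p)]
    exact (F_mid_ge occurs hh _
      (s_inside_ne_mid hp segs hmid (j+p) _ (by omega) (by omega))).1
  have hlQ : Q m h ≤ FT m h occurs (pathOf segs (off hp segs (j+p+1) - 1))
      (pathOf segs (off hp segs (j+p+1))) := by
    rw [s_off hp segs (j+p+1)]
    exact (F_mid_ge occurs hh _
      (s_inside_ne_mid hp segs hmid (j+p) _ (by omega) (by omega))).2
  -- (iii) dur M1 b ≥ Q + (3m+1)l
  have hB1 : off hp segs (j+p+1+1) = off hp segs (j+p+1) + 1 + (SG hp segs (j+p+1)).length := by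
    rw [off_succ]; ring
  have hlen1 : 0 < (SG hp segs (j+p+1)).length := SG_len_pos hp segs hne (j+p+1)
  have hedge3 : Q m h ≤ FT m h occurs (pathOf segs (off hp segs (j+p+1)))
      (pathOf segs (off hp segs (j+p+1) + 1)) := by
    rw [s_off hp segs (j+p+1)]
    exact (F_mid_ge occurs hh _
      (s_inside_ne_mid hp segs hmid (j+p+1) _ (by omega) (by omega))).1
  have hbM2 : off hp segs (j+p+1) + 2 ≤ b := by
    rcases Nat.lt_or_ge (off hp segs (j+p+1) + 1) b with h1 | h1
    · omega
    · exfalso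
      have hbe : b = off hp segs (j+p+1) + 1 := by omega
      have hbs := (block_struct occurs hp segs hh hne hmid hsol (j+p+1)).1
      rw [← hbe] at hbs
      rcases hbs with h2 | h2 <;> rw [hbv] at h2 <;> exact absurd h2 (by simp)
  have hb1mid : pathOf segs (b-1) ≠ Vtx.mid := by
    intro e
    obtain ⟨j4, he4⟩ := (s_mid_iff hp segs hmid (b-1)).mp e
    have hbe : b = off hp segs j4 + 1 := by omega
    have hbs := (block_struct occurs hp segs hh hne hmid hsol j4).1
    rw [← hbe] at hbs
    rcases hbs with h2 | h2 <;> rw [hbv] at h2 <;> exact absurd h2 (by simp)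
  obtain ⟨j3, hj3a, hj3b⟩ := locate hp segs b
  have hbneoff : b ≠ off hp segs j3 := by
    intro e; rw [e, s_off] at hbv; exact absurd hbv (by simp)
  have hb1off : off hp segs j3 < b - 1 := by
    rcases Nat.lt_or_ge (off hp segs j3) (b-1) with h1 | h1
    · exact h1
    · exfalso
      have : b - 1 = off hp segs j3 := by omega
      exact hb1mid (by rw [this]; exact s_off hp segs j3)
  have hcheap4 : FT m h occurs (pathOf segs (b-1)) (pathOf segs (b-1+1)) < 2 * T m h :=
    interior_edge_cheap occurs hp segs hh hne hmid hsol j3 (b-1) hb1off (by omega)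
  have eb : b - 1 + 1 = b := by omega
  have hb1ne : pathOf segs (b-1) ≠ pathOf segs b := by
    have hd := hsol.1 (b-1); rw [eb] at hd; exact hd
  have hedge4 : (3*m+1) * l h ≤ FT m h occurs (pathOf segs (b-1)) (pathOf segs (b-1+1)) := by
    rw [eb] at hcheap4 ⊢
    have hsymm := FT_symm_special m h occurs (pathOf segs b) (pathOf segs (b-1))
      (by rw [hbv]; rfl) hb1ne hb1mid
    rw [hsymm] at hcheap4 ⊢
    rcases FT_from_special m h occurs (pathOf segs b) (pathOf segs (b-1))
      (by rw [hbv]; rfl) hb1ne hb1mid with h2T | ⟨hge, _⟩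
    · omega
    · exact hge
  have hdurM1b : Q m h + (3*m+1) * l h ≤
      dur (FT m h occurs) (pathOf segs) (off hp segs (j+p+1)) b := by
    have h2t := two_term_le (FT m h occurs) (pathOf segs)
      (le_refl (off hp segs (j+p+1))) (show off hp segs (j+p+1) < b - 1 by omega)
      (show b - 1 < b by omega)
    omega
  have hsplitab : dur (FT m h occurs) (pathOf segs) a b =
      dur (FT m h occurs) (pathOf segs) a (off hp segs (j+p)) +
      dur (FT m h occurs) (pathOf segs) (off hp segs (j+p)) (off hp segs (j+p+1)) +
      dur (FT m h occurs) (pathOf segs) (off hp segs (j+p+1)) b := by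
    have e1 := dur_split (FT m h occurs) (pathOf segs)
      (show a ≤ off hp segs (j+p) by omega) (show off hp segs (j+p) ≤ b by omega)
    have e2 := dur_split (FT m h occurs) (pathOf segs)
      (show off hp segs (j+p) ≤ off hp segs (j+p+1) by omega) (show off hp segs (j+p+1) ≤ b by omega)
    rw [e1, e2]; ring
  have hRD : RD m h (Vtx.shared k) = T m h + 2*h := rfl
  rw [hRD] at hdur
  have hu : l h ≤ (3*m+1) * l h := Nat.le_mul_of_pos_left (l h) (by omega)
  have hl34 : l h = 24*h+34 := rfl
  omega

lemma topbot_mem (hm : 2 < m) (hh : 0 < h) (hne : ∀ j, segs j ≠ [])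
    (hmid : ∀ j, Vtx.mid ∉ segs j)
    (hsol : IsSolution (RD m h) (FT m h occurs) (pathOf segs))
    (j : ℕ) (v : Vtx m h) (hv : v = Vtx.top ∨ v = Vtx.bot) : v ∈ SG hp segs j := by
  by_contra hnv
  obtain ⟨a, b, hav, hbv, haM0, hM1b, hdur, hno⟩ :=
    straddle occurs hp segs hmid hsol v (by rcases hv with rfl | rfl <;> simp) j hnv
  have hQ := Q_pos m h hh
  have hTQ := T_eq_four_Q m h
  have hMM : off hp segs (j+p) < off hp segs (j+p+1) := off_lt_succ hp segs _
  have hB0 : off hp segs (j+p+1) = off hp segs (j+p) + 1 + (SG hp segs (j+p)).length := by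
    rw [off_succ]; ring
  have hlen0 : 0 < (SG hp segs (j+p)).length := SG_len_pos hp segs hne (j+p)
  have hB1 : off hp segs (j+p+1+1) = off hp segs (j+p+1) + 1 + (SG hp segs (j+p+1)).length := by
    rw [off_succ]; ring
  have hlen1 : 0 < (SG hp segs (j+p+1)).length := SG_len_pos hp segs hne (j+p+1)
  -- ends
  have hedge2 : Q m h ≤ FT m h occurs (pathOf segs (off hp segs (j+p) - 1))
      (pathOf segs (off hp segs (j+p) - 1 + 1)) := by
    have e : off hp segs (j+p) - 1 + 1 = off hp segs (j+p) := by omega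
    have hmid0 : pathOf segs (off hp segs (j+p) - 1 + 1) = Vtx.mid := by
      rw [e]; exact s_off hp segs (j+p)
    have hne' : pathOf segs (off hp segs (j+p) - 1) ≠ Vtx.mid := by
      have hd := hsol.1 (off hp segs (j+p) - 1)
      rw [hmid0] at hd; exact hd
    rw [hmid0]
    exact (F_mid_ge occurs hh _ hne').2
  have hedge3 : Q m h ≤ FT m h occurs (pathOf segs (off hp segs (j+p+1)))
      (pathOf segs (off hp segs (j+p+1) + 1)) := by
    rw [s_off hp segs (j+p+1)]
    exact (F_mid_ge occurs hh _
      (s_inside_ne_mid hp segs hmid (j+p+1) _ (by omega) (by omega))).1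
  have hd2 : Q m h ≤ dur (FT m h occurs) (pathOf segs) a (off hp segs (j+p)) :=
    le_trans hedge2 (one_term_le _ _ (show a ≤ off hp segs (j+p) - 1 by omega)
      (show off hp segs (j+p) - 1 < off hp segs (j+p) by omega))
  have hd3 : Q m h ≤ dur (FT m h occurs) (pathOf segs) (off hp segs (j+p+1)) b :=
    le_trans hedge3 (one_term_le _ _ (le_refl (off hp segs (j+p+1))) (by omega))
  -- interior of the (j+p)-th block contains a shared vertex
  have hk0 : (0 : ℕ) < 2*m-1 := by omega
  have hsh : Vtx.shared ⟨0, hk0⟩ ∈ SG hp segs (j + p) :=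
    shared_mem occurs hp segs hh hne hmid hsol (j+p) ⟨0, hk0⟩
  obtain ⟨i0, hi0, hi0v⟩ := List.getElem_of_mem hsh
  have hq : pathOf segs (off hp segs (j+p) + 1 + i0) = Vtx.shared ⟨0, hk0⟩ := by
    rw [s_at hp segs _ i0 hi0, List.getD_eq_getElem _ _ hi0, hi0v]
  have hqlt : off hp segs (j+p) + 1 + i0 < off hp segs (j+p+1) - 1 := by
    have h1 : off hp segs (j+p) + 1 + i0 ≤ off hp segs (j+p+1) - 1 := by omega
    rcases Nat.eq_or_lt_of_le h1 with he | hlt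
    · exfalso
      have hbs := (block_struct occurs hp segs hh hne hmid hsol (j+p)).2.1
      rw [← he] at hbs
      rcases hbs with h2 | h2 <;> rw [hq] at h2 <;> exact absurd h2 (by simp)
    · exact hlt
  have hcheapq : FT m h occurs (pathOf segs (off hp segs (j+p) + 1 + i0))
      (pathOf segs (off hp segs (j+p) + 1 + i0 + 1)) < 2 * T m h :=
    interior_edge_cheap occurs hp segs hh hne hmid hsol (j+p) _ (by omega) (by omega)
  have hqmid : pathOf segs (off hp segs (j+p) + 1 + i0 + 1) ≠ Vtx.mid :=
    s_inside_ne_mid hp segs hmid (j+p) _ (by omega) (by omega)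
  have hqne : pathOf segs (off hp segs (j+p) + 1 + i0 + 1) ≠
      pathOf segs (off hp segs (j+p) + 1 + i0) :=
    Ne.symm (hsol.1 _)
  have hedgeq : (3*m+1) * l h ≤ FT m h occurs (pathOf segs (off hp segs (j+p) + 1 + i0))
      (pathOf segs (off hp segs (j+p) + 1 + i0 + 1)) := by
    rcases FT_from_special m h occurs (pathOf segs (off hp segs (j+p) + 1 + i0))
      (pathOf segs (off hp segs (j+p) + 1 + i0 + 1))
      (by rw [hq]; rfl) hqne hqmid with h2T | ⟨hge, _⟩
    · omega
    · exact hge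
  have hinner : (3*m+1) * l h ≤ dur (FT m h occurs) (pathOf segs)
      (off hp segs (j+p) + 1) (off hp segs (j+p+1) - 1) :=
    le_trans hedgeq (one_term_le _ _ (by omega) hqlt)
  have hsplitM := block_split occurs hp segs hne (j+p)
  have hfQ : Q m h ≤ FT m h occurs (pathOf segs (off hp segs (j+p)))
      (pathOf segs (off hp segs (j+p) + 1)) := by
    rw [s_off hp segs (j+p)]
    exact (F_mid_ge occurs hh _
      (s_inside_ne_mid hp segs hmid (j+p) _ (by omega) (by omega))).1
  have hlQ : Q m h ≤ FT m h occurs (pathOf segs (off hp segs (j+p+1) - 1))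
      (pathOf segs (off hp segs (j+p+1))) := by
    rw [s_off hp segs (j+p+1)]
    exact (F_mid_ge occurs hh _
      (s_inside_ne_mid hp segs hmid (j+p) _ (by omega) (by omega))).2
  have hsplitab : dur (FT m h occurs) (pathOf segs) a b =
      dur (FT m h occurs) (pathOf segs) a (off hp segs (j+p)) +
      dur (FT m h occurs) (pathOf segs) (off hp segs (j+p)) (off hp segs (j+p+1)) +
      dur (FT m h occurs) (pathOf segs) (off hp segs (j+p+1)) b := by
    have e1 := dur_split (FT m h occurs) (pathOf segs)
      (show a ≤ off hp segs (j+p) by omega) (show off hp segs (j+p) ≤ b by omega)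
    have e2 := dur_split (FT m h occurs) (pathOf segs)
      (show off hp segs (j+p) ≤ off hp segs (j+p+1) by omega) (show off hp segs (j+p+1) ≤ b by omega)
    rw [e1, e2]; ring
  have hRD : RD m h v = T m h := by rcases hv with rfl | rfl <;> rfl
  rw [hRD] at hdur
  have hupos : 0 < (3*m+1) * l h := Nat.mul_pos (by omega) (lh_pos h)
  omega

end Mem
section Count
variable {m h p : ℕ}
variable (occurs : Fin h → Fin (2 * m) → Option Bool)
variable (hp : 0 < p) (segs : Fin p → List (Vtx m h))

lemma spec_dur (hh : 0 < h) (hne : ∀ j, segs j ≠ []) (hmid : ∀ j, Vtx.mid ∉ segs j)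
    (hsol : IsSolution (RD m h) (FT m h occurs) (pathOf segs)) (j : ℕ) :
    ∀ g a b, b - a ≤ g → off hp segs j < a → a ≤ b → b < off hp segs (j+1) →
    isSpecial (pathOf segs a) = true → isSpecial (pathOf segs b) = true →
    (((Finset.Icc a b).filter (fun i => isSpecial (pathOf segs i))).card - 1) *
        (2 * ((3*m+1) * l h))
      ≤ dur (FT m h occurs) (pathOf segs) a b := by
  intro g
  induction g with
  | zero =>
      intro a b hg h1 h2 h3 hsa hsb
      have hab : a = b := by omega
      subst hab
      simp [Finset.Icc_self, Finset.filter_singleton, hsa]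
  | succ g ih =>
      intro a b hg h1 h2 h3 hsa hsb
      rcases Nat.eq_or_lt_of_le h2 with hab | hab
      · subst hab
        simp [Finset.Icc_self, Finset.filter_singleton, hsa]
      · -- a < b
        have hSne : b ∈ {i | a < i ∧ i ≤ b ∧ isSpecial (pathOf segs i) = true} :=
          ⟨hab, le_refl b, hsb⟩
        obtain ⟨ha'1, ha'2, ha'3⟩ := Nat.sInf_mem (Set.nonempty_of_mem hSne)
        set a' := sInf {i | a < i ∧ i ≤ b ∧ isSpecial (pathOf segs i) = true} with ha'def
        have hmin : ∀ i, a < i → i < a' → isSpecial (pathOf segs i) = false := by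
          intro i hi1 hi2
          have h4 : i ∉ {i | a < i ∧ i ≤ b ∧ isSpecial (pathOf segs i) = true} :=
            Nat.notMem_of_lt_sInf (by rw [← ha'def]; exact hi2)
          simp only [Set.mem_setOf_eq, not_and] at h4
          have h5 := h4 hi1 (by omega)
          simpa using h5
        -- edge from a is cheap and long
        have hcheap1 : FT m h occurs (pathOf segs a) (pathOf segs (a+1)) < 2 * T m h :=
          interior_edge_cheap occurs hp segs hh hne hmid hsol j a h1 (by omega)
        have ha1mid : pathOf segs (a+1) ≠ Vtx.mid :=
          s_inside_ne_mid hp segs hmid j (a+1) (by omega) (by omega)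
        have ha1ne : pathOf segs (a+1) ≠ pathOf segs a := Ne.symm (hsol.1 a)
        have hstep : (3*m+1) * l h ≤ FT m h occurs (pathOf segs a) (pathOf segs (a+1)) ∧
            isSpecial (pathOf segs (a+1)) = false := by
          rcases FT_from_special m h occurs (pathOf segs a) (pathOf segs (a+1))
            hsa ha1ne ha1mid with h2T | ⟨hge, hns⟩
          · omega
          · exact ⟨hge, hns⟩
        have ha'ge : a + 2 ≤ a' := by
          rcases Nat.lt_or_ge (a+1) a' with h4 | h4
          · omega
          · exfalso
            have : a' = a + 1 := by omega
            rw [this] at ha'3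
            rw [hstep.2] at ha'3
            exact Bool.false_ne_true ha'3
        -- edge into a' is long
        have ea' : a' - 1 + 1 = a' := by omega
        have ha'1mid : pathOf segs (a'-1) ≠ Vtx.mid :=
          s_inside_ne_mid hp segs hmid j (a'-1) (by omega) (by omega)
        have ha'1ne : pathOf segs (a'-1) ≠ pathOf segs a' := by
          have hd := hsol.1 (a'-1); rw [ea'] at hd; exact hd
        have hcheap2 : FT m h occurs (pathOf segs (a'-1)) (pathOf segs (a'-1+1)) < 2 * T m h :=
          interior_edge_cheap occurs hp segs hh hne hmid hsol j (a'-1) (by omega) (by omega)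
        have hedge2 : (3*m+1) * l h ≤
            FT m h occurs (pathOf segs (a'-1)) (pathOf segs (a'-1+1)) := by
          rw [ea'] at hcheap2 ⊢
          have hsymm := FT_symm_special m h occurs (pathOf segs a') (pathOf segs (a'-1))
            ha'3 ha'1ne ha'1mid
          rw [hsymm] at hcheap2 ⊢
          rcases FT_from_special m h occurs (pathOf segs a') (pathOf segs (a'-1))
            ha'3 ha'1ne ha'1mid with h2T | ⟨hge, _⟩
          · omega
          · exact hge
        have hdur1 : 2 * ((3*m+1) * l h) ≤
            dur (FT m h occurs) (pathOf segs) a a' := by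
          have h2t := two_term_le (FT m h occurs) (pathOf segs)
            (le_refl a) (show a < a' - 1 by omega) (show a' - 1 < a' by omega)
          omega
        -- cardinality split
        have hsetsplit : Finset.Icc a b = Finset.Ico a a' ∪ Finset.Icc a' b := by
          ext x
          simp only [Finset.mem_Icc, Finset.mem_Ico, Finset.mem_union]
          omega
        have hdisj : Disjoint (Finset.Ico a a') (Finset.Icc a' b) := by
          rw [Finset.disjoint_left]
          intro x hx1 hx2
          simp only [Finset.mem_Ico] at hx1
          simp only [Finset.mem_Icc] at hx2
          omega
        have hfilter1 : (Finset.Ico a a').filter (fun i => isSpecial (pathOf segs i)) = {a} := by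
          ext x
          simp only [Finset.mem_filter, Finset.mem_Ico, Finset.mem_singleton]
          constructor
          · rintro ⟨⟨hx1, hx2⟩, hx3⟩
            by_contra hxa
            have : a < x := by omega
            have := hmin x this hx2
            rw [this] at hx3
            exact Bool.false_ne_true hx3
          · rintro rfl
            exact ⟨⟨le_refl _, by omega⟩, hsa⟩
        have hcard : ((Finset.Icc a b).filter (fun i => isSpecial (pathOf segs i))).card =
            1 + ((Finset.Icc a' b).filter (fun i => isSpecial (pathOf segs i))).card := by
          rw [hsetsplit, Finset.filter_union,
            Finset.card_union_of_disjoint (Finset.disjoint_filter_filter hdisj), hfilter1]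
          simp
        have hc'pos : 1 ≤ ((Finset.Icc a' b).filter (fun i => isSpecial (pathOf segs i))).card := by
          rw [Nat.one_le_iff_ne_zero, ← Nat.pos_iff_ne_zero, Finset.card_pos]
          exact ⟨b, Finset.mem_filter.mpr ⟨Finset.mem_Icc.mpr ⟨ha'2, le_refl b⟩, hsb⟩⟩
        have hIH := ih a' b (by omega) (by omega) ha'2 h3 ha'3 hsb
        have hsplit := dur_split (FT m h occurs) (pathOf segs)
          (show a ≤ a' by omega) (show a' ≤ b from ha'2)
        rw [hcard]
        set c' := ((Finset.Icc a' b).filter (fun i => isSpecial (pathOf segs i))).card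
        have hmul : (1 + c' - 1) * (2 * ((3*m+1) * l h)) =
            (c' - 1) * (2 * ((3*m+1) * l h)) + 2 * ((3*m+1) * l h) := by
          have e : 1 + c' - 1 = (c' - 1) + 1 := by omega
          rw [e]; ring
        rw [hmul]
        omega

lemma countP_eq_sum {V : Type*} (d : V) (P : V → Bool) (L : List V) :
    L.countP P = ∑ i ∈ Finset.range L.length, if P (L.getD i d) then 1 else 0 := by
  induction L with
  | nil => simp
  | cons x L ih =>
      rw [List.countP_cons, List.length_cons, Finset.sum_range_succ']
      simp only [List.getD_cons_succ, List.getD_cons_zero]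
      rw [← ih]

lemma cnt_eq (hne : ∀ j, segs j ≠ []) (j : ℕ) :
    ((Finset.Icc (off hp segs j + 1) (off hp segs (j+1) - 1)).filter
      (fun i => isSpecial (pathOf segs i))).card = (SG hp segs j).countP isSpecial := by
  have hB : off hp segs (j+1) = off hp segs j + 1 + (SG hp segs j).length := by
    rw [off_succ]; ring
  have hlen : 0 < (SG hp segs j).length := SG_len_pos hp segs hne j
  have hicc : Finset.Icc (off hp segs j + 1) (off hp segs (j+1) - 1) =
      Finset.Ico (off hp segs j + 1) (off hp segs j + 1 + (SG hp segs j).length) := by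
    rw [← Finset.Ico_add_one_right_eq_Icc]
    congr 1
    omega
  rw [hicc, Finset.card_filter, Finset.sum_Ico_eq_sum_range]
  have e : off hp segs j + 1 + (SG hp segs j).length - (off hp segs j + 1) =
      (SG hp segs j).length := by omega
  rw [e, countP_eq_sum Vtx.mid]
  apply Finset.sum_congr rfl
  intro i hi
  simp only [Finset.mem_range] at hi
  rw [s_at hp segs j i hi]

lemma arith_cnt (c : ℕ) (hle : (c - 1) * (2 * ((3*m+1) * l h)) ≤ 2 * Q m h) :
    c ≤ 2*m+1 := by
  by_contra hc
  have h1 : (2*m+1) * (2 * ((3*m+1) * l h)) ≤ (c-1) * (2 * ((3*m+1) * l h)) :=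
    Nat.mul_le_mul_right _ (by omega)
  have h2 : (2*m+1) * (2 * ((3*m+1) * l h)) =
      (12*m^2+8*m+1) * l h + (2*m+1) * l h := by ring
  have h3 : 2 * Q m h = (12*m^2+8*m+1) * l h + 2*h := by
    unfold Q l; ring
  have h4 : l h ≤ (2*m+1) * l h := Nat.le_mul_of_pos_left (l h) (by omega)
  have h5 : l h = 24*h+34 := rfl
  omega

lemma countP_le (hh : 0 < h) (hne : ∀ j, segs j ≠ []) (hmid : ∀ j, Vtx.mid ∉ segs j)
    (hsol : IsSolution (RD m h) (FT m h occurs) (pathOf segs)) (j : ℕ) :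
    (SG hp segs j).countP isSpecial ≤ 2*m+1 := by
  have hB : off hp segs (j+1) = off hp segs j + 1 + (SG hp segs j).length := by
    rw [off_succ]; ring
  have hlen : 0 < (SG hp segs j).length := SG_len_pos hp segs hne j
  obtain ⟨hfirst, hlast, hdur⟩ := block_struct occurs hp segs hh hne hmid hsol j
  have hsa : isSpecial (pathOf segs (off hp segs j + 1)) = true := by
    rcases hfirst with h1 | h1 <;> rw [h1] <;> rfl
  have hsb : isSpecial (pathOf segs (off hp segs (j+1) - 1)) = true := by
    rcases hlast with h1 | h1 <;> rw [h1] <;> rfl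
  have hsd := spec_dur occurs hp segs hh hne hmid hsol j
    (off hp segs (j+1) - 1 - (off hp segs j + 1))
    (off hp segs j + 1) (off hp segs (j+1) - 1)
    (le_refl _) (by omega) (by omega) (by omega) hsa hsb
  rw [cnt_eq hp segs hne j] at hsd
  exact arith_cnt (m := m) (h := h) ((SG hp segs j).countP isSpecial) (by omega)

lemma counts_sum (L : List (Vtx m h)) :
    L.count Vtx.top + L.count Vtx.bot + ∑ k : Fin (2*m-1), L.count (Vtx.shared k) =
      L.countP isSpecial := by
  induction L with
  | nil => simp
  | cons x L ih =>
      rw [List.countP_cons]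
      simp only [List.count_cons]
      rw [Finset.sum_add_distrib]
      cases x <;> simp [isSpecial] <;> omega

end Count
/-- `v_top`, `v_bot` and each shared vertex occurs exactly once in
each segment. -/
theorem top_bot_shared_once (m h : ℕ) (hm : 2 < m) (hh : 0 < h)
    (occurs : Fin h → Fin (2 * m) → Option Bool)
    (p : ℕ) (hp : 0 < p) (segs : Fin p → List (Vtx m h))
    (hne : ∀ j, segs j ≠ [])
    (hmid : ∀ j, Vtx.mid ∉ segs j)
    (hsol : IsSolution (RD m h) (FT m h occurs) (pathOf segs)) :
    ∀ j, (segs j).count Vtx.top = 1 ∧ (segs j).count Vtx.bot = 1 ∧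
      ∀ k : Fin (2 * m - 1), (segs j).count (Vtx.shared k) = 1 := by
  intro j
  have hSGj : SG hp segs (j : ℕ) = segs j := by
    rw [SG_lt hp segs (j : ℕ) j.isLt]
  have hcnt := countP_le occurs hp segs hh hne hmid hsol (j : ℕ)
  have hsum := counts_sum (m := m) (h := h) (SG hp segs (j : ℕ))
  have htop : 1 ≤ (SG hp segs (j : ℕ)).count Vtx.top :=
    List.count_pos_iff.mpr
      (topbot_mem occurs hp segs hm hh hne hmid hsol (j : ℕ) Vtx.top (Or.inl rfl))
  have hbot : 1 ≤ (SG hp segs (j : ℕ)).count Vtx.bot :=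
    List.count_pos_iff.mpr
      (topbot_mem occurs hp segs hm hh hne hmid hsol (j : ℕ) Vtx.bot (Or.inr rfl))
  have hsh : ∀ k : Fin (2*m-1), 1 ≤ (SG hp segs (j : ℕ)).count (Vtx.shared k) := fun k =>
    List.count_pos_iff.mpr (shared_mem occurs hp segs hh hne hmid hsol (j : ℕ) k)
  have hsumge : 2*m-1 ≤ ∑ k : Fin (2*m-1), (SG hp segs (j : ℕ)).count (Vtx.shared k) := by
    calc 2*m-1 = ∑ _k : Fin (2*m-1), 1 := by simp
    _ ≤ _ := Finset.sum_le_sum (fun k _ => hsh k)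
  refine ⟨?_, ?_, ?_⟩
  · rw [← hSGj]; omega
  · rw [← hSGj]; omega
  · intro k
    rw [← hSGj]
    have hsplit : ∑ k' ∈ Finset.univ.erase k,
        (SG hp segs (j : ℕ)).count (Vtx.shared k') +
        (SG hp segs (j : ℕ)).count (Vtx.shared k) =
        ∑ k' : Fin (2*m-1), (SG hp segs (j : ℕ)).count (Vtx.shared k') :=
      Finset.sum_erase_add Finset.univ _ (Finset.mem_univ k)
    have herase : 2*m-2 ≤ ∑ k' ∈ Finset.univ.erase k,
        (SG hp segs (j : ℕ)).count (Vtx.shared k') := by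
      calc 2*m-2 = ∑ _k' ∈ Finset.univ.erase k, 1 := by
            rw [Finset.sum_const, Finset.card_erase_of_mem (Finset.mem_univ k)]
            simp
            omega
      _ ≤ _ := Finset.sum_le_sum (fun k' _ => hsh k')
    have hk := hsh k
    omega

end CRUAV
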